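/- arXiv:2312.11661 — 8 statements merged into one kernel-verified Lean document; each statement's English description precedes it below -/
import Mathlib

section
/- If n is a perfect number (σ(n) = 2n), then z(n) < log(τ(n) − 1), where z(n) = ∑_{d|n} (log d)/d. -/
/-!
Since `σ(n) = 2n`, the reciprocals `1/d` of the divisors `d > 1` of `n` sum to `1`, so they are
weights. As `log 1 = 0`, `z(n) = ∑_{d ∣ n, d > 1} (1/d) log d`, and by strict concavity of `log`
this is below `log (∑_{d ∣ n, d > 1} (1/d) d) = log (τ(n) - 1)`. The inequality is strict because
there are at least two divisors `d > 1`: weights `1/d ≤ 1/2` can only sum to `1` if there are two.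
-/

open Finset Real

theorem Nat.sum_inv_divisors_eq_sum_divisors_div {K : Type*} [Field K] [CharZero K] {n : ℕ}
    (hn : 0 < n) : ∑ d ∈ n.divisors, (d : K)⁻¹ = (∑ d ∈ n.divisors, (d : K)) / n := by
  rw [← Nat.sum_div_divisors n (fun d => (d : K)), sum_div]
  refine sum_congr rfl fun d hd => ?_
  have hdvd := Nat.dvd_of_mem_divisors hd
  have hd0 : (d : K) ≠ 0 := by exact_mod_cast (Nat.pos_of_mem_divisors hd).ne'
  have hn0 : (n : K) ≠ 0 := by exact_mod_cast hn.ne'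
  rw [Nat.cast_div hdvd hd0]
  field_simp

theorem Nat.sum_inv_divisors_erase_one_of_perfect {n : ℕ} (hn : 0 < n)
    (hperf : ∑ d ∈ n.divisors, d = 2 * n) :
    ∑ d ∈ n.divisors.erase 1, (d : ℝ)⁻¹ = 1 := by
  have htotal : ∑ d ∈ n.divisors, (d : ℝ)⁻¹ = 2 := by
    rw [Nat.sum_inv_divisors_eq_sum_divisors_div hn, ← Nat.cast_sum, hperf]
    field_simp
    push_cast
    ring
  rw [← add_sum_erase _ _ (Nat.one_mem_divisors.mpr hn.ne')] at htotal
  norm_num at htotal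
  linarith

theorem Finset.one_lt_card_of_sum_inv_eq_one {s : Finset ℕ} (hs : ∀ d ∈ s, 1 < d)
    (hsum : ∑ d ∈ s, (d : ℝ)⁻¹ = 1) : 1 < #s := by
  have hle : ∑ d ∈ s, (d : ℝ)⁻¹ ≤ #s • (2 : ℝ)⁻¹ := by
    refine sum_le_card_nsmul _ _ _ fun d hd => inv_anti₀ two_pos ?_
    exact_mod_cast hs d hd
  rw [hsum, nsmul_eq_mul] at hle
  have : (1 : ℝ) < #s := by linarith
  exact_mod_cast this

theorem Finset.sum_log_div_lt_log_card_of_sum_inv_eq_one {s : Finset ℕ} (hs : ∀ d ∈ s, 0 < d)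
    (hsum : ∑ d ∈ s, (d : ℝ)⁻¹ = 1) (hcard : 1 < #s) :
    ∑ d ∈ s, log d / d < log #s := by
  have hpos : ∀ d ∈ s, (0 : ℝ) < d := fun d hd => by exact_mod_cast hs d hd
  obtain ⟨j, hj, k, hk, hjk⟩ := one_lt_card.mp hcard
  have hjensen := strictConcaveOn_log_Ioi.lt_map_sum (p := fun d : ℕ => (d : ℝ))
    (fun d hd => inv_pos.mpr (hpos d hd)) hsum hpos ⟨j, hj, k, hk, by exact_mod_cast hjk⟩
  have hmean : ∑ d ∈ s, (d : ℝ)⁻¹ • (d : ℝ) = #s := by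
    rw [sum_congr rfl fun d hd => (smul_eq_mul _ _).trans (inv_mul_cancel₀ (hpos d hd).ne'),
      sum_const, nsmul_one]
  rw [hmean] at hjensen
  simpa only [smul_eq_mul, inv_mul_eq_div] using hjensen

theorem zaremba_perfect_upper (n : ℕ) (hn : 0 < n) (hperf : (∑ d ∈ n.divisors, d) = 2 * n) :
    ∑ d ∈ n.divisors, Real.log d / d < Real.log (n.divisors.card - 1) := by
  have h1 : 1 ∈ n.divisors := Nat.one_mem_divisors.mpr hn.ne'
  have hgt : ∀ d ∈ n.divisors.erase 1, 1 < d := fun d hd =>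
    lt_of_le_of_ne (Nat.pos_of_mem_divisors (mem_of_mem_erase hd)) (ne_of_mem_erase hd).symm
  have hsum := Nat.sum_inv_divisors_erase_one_of_perfect hn hperf
  have hcard : ((#(n.divisors.erase 1) : ℕ) : ℝ) = #n.divisors - 1 := by
    rw [card_erase_of_mem h1, Nat.cast_sub (card_pos.mpr ⟨1, h1⟩), Nat.cast_one]
  calc ∑ d ∈ n.divisors, Real.log d / d = ∑ d ∈ n.divisors.erase 1, Real.log d / d := by
        rw [← add_sum_erase _ _ h1]; simp
    _ < Real.log (n.divisors.card - 1) := by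
        rw [← hcard]
        exact sum_log_div_lt_log_card_of_sum_inv_eq_one (fun d hd => (hgt d hd).trans' one_pos)
          hsum (one_lt_card_of_sum_inv_eq_one hgt hsum)
end

section
/- If n is a deficient number (σ(n) < 2n), then z(n) ≤ log(τ(n) + 2 − h(n)), where z(n) = ∑_{d|n} (log d)/d and h(n) = σ(n)/n. -/
open Finset Real

theorem Nat.sum_divisors_inv_eq (n : ℕ) :
    ∑ d ∈ n.divisors, (d : ℝ)⁻¹ = ((∑ d ∈ n.divisors, d : ℕ) : ℝ) / n := by
  rw [Nat.cast_sum, sum_div, ← Nat.sum_div_divisors n]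
  refine sum_congr rfl fun d hd => ?_
  have hd0 : (d : ℝ) ≠ 0 := Nat.cast_ne_zero.mpr (Nat.pos_of_mem_divisors hd).ne'
  rw [Nat.cast_div (Nat.dvd_of_mem_divisors hd) hd0, inv_div]

/-- Jensen's inequality for `log` with weight `1 / p i` on each point `p i` and the excess weight
`1 - ∑ 1 / p i` put on a point equal to `1`, where `log` vanishes. -/
theorem sum_log_div_le_log_card_add_one_sub {ι : Type*} [DecidableEq ι] (s : Finset ι)
    (p : ι → ℝ) (hp : ∀ i ∈ s, 0 < p i) {i₀ : ι} (hi₀ : i₀ ∈ s) (hpi₀ : p i₀ = 1)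
    (hsum : ∑ i ∈ s, (p i)⁻¹ ≤ 2) :
    ∑ i ∈ s, log (p i) / p i ≤ log (#s + 1 - ∑ i ∈ s, (p i)⁻¹) := by
  set h := ∑ i ∈ s, (p i)⁻¹
  set w : ι → ℝ := fun i => (p i)⁻¹ + if i = i₀ then 1 - h else 0
  have hw_nonneg : ∀ i ∈ s, 0 ≤ w i := by
    intro i hi
    by_cases hii₀ : i = i₀
    · simp only [w, hii₀, hpi₀, if_true, inv_one]
      linarith
    · simp only [w, hii₀, if_false, add_zero]
      exact (inv_pos.mpr (hp i hi)).le
  have hw_sum : ∑ i ∈ s, w i = 1 := by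
    simp only [w, sum_add_distrib, sum_ite_eq', hi₀, if_true]
    ring
  have jensen := strictConcaveOn_log_Ioi.concaveOn.le_map_sum hw_nonneg hw_sum hp
  have hlog : ∑ i ∈ s, w i • log (p i) = ∑ i ∈ s, log (p i) / p i := by
    simp only [w, smul_eq_mul, add_mul, sum_add_distrib, ite_mul, zero_mul,
      sum_ite_eq', hi₀, if_true, hpi₀, log_one, mul_zero, add_zero, inv_mul_eq_div]
  have hmean : ∑ i ∈ s, w i • p i = #s + 1 - h := by
    have hcancel : ∑ i ∈ s, (p i)⁻¹ * p i = #s := by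
      rw [card_eq_sum_ones, Nat.cast_sum, Nat.cast_one]
      exact sum_congr rfl fun i hi => inv_mul_cancel₀ (hp i hi).ne'
    simp only [w, smul_eq_mul, add_mul, sum_add_distrib, ite_mul, zero_mul,
      sum_ite_eq', hi₀, if_true, hpi₀, hcancel]
    ring
  rwa [hlog, hmean] at jensen

theorem zaremba_deficient_upper_general (n : ℕ) (hdef : (∑ d ∈ n.divisors, d) < 2 * n) :
    ∑ d ∈ n.divisors, Real.log d / d ≤
      Real.log ((n.divisors.card : ℝ) + 2 - ((∑ d ∈ n.divisors, d : ℕ) : ℝ) / n) := by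
  have hn : n ≠ 0 := by
    rintro rfl
    simp at hdef
  have habundancy_lt : ((∑ d ∈ n.divisors, d : ℕ) : ℝ) / n < 2 := by
    rw [div_lt_iff₀ (by positivity)]
    exact_mod_cast hdef
  have hone : (1 : ℕ) ∈ n.divisors := Nat.one_mem_divisors.mpr hn
  have hcard : (1 : ℝ) ≤ #n.divisors := by exact_mod_cast card_pos.mpr ⟨1, hone⟩
  have hjensen := sum_log_div_le_log_card_add_one_sub n.divisors (fun d => (d : ℝ))
    (fun d hd => Nat.cast_pos.mpr (Nat.pos_of_mem_divisors hd)) hone Nat.cast_one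
    (by rw [Nat.sum_divisors_inv_eq]; exact habundancy_lt.le)
  rw [Nat.sum_divisors_inv_eq] at hjensen
  exact hjensen.trans (log_le_log (by linarith) (by linarith))

theorem zaremba_deficient_upper (n : ℕ) (hn : 0 < n) (hdef : (∑ d ∈ n.divisors, d) < 2 * n) :
    ∑ d ∈ n.divisors, Real.log d / d ≤
      Real.log ((n.divisors.card : ℝ) + 2 - ((∑ d ∈ n.divisors, d : ℕ) : ℝ) / n) :=
  zaremba_deficient_upper_general n hdef
end

section
/- z(n) = O((log τ(n))²); more precisely, there is an absolute constant C such that for all n ≥ 2, z(n) ≤ C·(log τ(n) + 1)². -/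
/-!
Put `k = τ(n)` and split the divisors of `n` at `k²`. The divisors `d ≤ k²` contribute at most
`log (k²)` times the harmonic sum `H(k²) ≤ 1 + log (k²)`, which is `O((log k)²)`. Each of the at
most `k` divisors `d > k²` has `log d / d ≤ 2 / √d < 2 / k`, so together they contribute at most `2`.
-/

open Finset Real

lemma Real.log_le_two_mul_sqrt {x : ℝ} (hx : 0 ≤ x) : log x ≤ 2 * √x := by
  simpa [sqrt_eq_rpow, div_eq_mul_inv, mul_comm] using log_le_rpow_div hx one_half_pos

lemma Real.log_div_self_le_two_div_sqrt {x : ℝ} (hx : 0 < x) : log x / x ≤ 2 / √x := by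
  have hs : 0 < √x := sqrt_pos.mpr hx
  calc log x / x ≤ 2 * √x / x := by gcongr; exact log_le_two_mul_sqrt hx.le
    _ = 2 / √x := by
      rw [div_eq_div_iff hx.ne' hs.ne', mul_assoc, mul_self_sqrt hx.le]

section

variable (S : Finset ℕ)

lemma sum_log_div_self_le_of_forall_le (m : ℕ) (hS : ∀ d ∈ S, 0 < d ∧ d ≤ m) :
    ∑ d ∈ S, log d / d ≤ log m * (1 + log m) := by
  have hsub : S ⊆ Icc 1 m := fun d hd => mem_Icc.mpr (hS d hd)
  calc ∑ d ∈ S, log d / d ≤ ∑ d ∈ S, log m * (d : ℝ)⁻¹ := by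
        refine sum_le_sum fun d hd => ?_
        obtain ⟨hd0, hdm⟩ := hS d hd
        rw [div_eq_mul_inv]
        gcongr
    _ = log m * ∑ d ∈ S, (d : ℝ)⁻¹ := by rw [mul_sum]
    _ ≤ log m * harmonic m := by
        rw [harmonic_eq_sum_Icc]
        push_cast
        gcongr
    _ ≤ log m * (1 + log m) := by
        gcongr
        exact harmonic_le_one_add_log m

lemma sum_log_div_self_le_of_forall_sq_lt {m : ℕ} (hm : 0 < m) (hS : ∀ d ∈ S, m ^ 2 < d) :
    ∑ d ∈ S, log d / d ≤ #S * (2 / m) := by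
  rw [← nsmul_eq_mul, ← sum_const]
  refine sum_le_sum fun d hd => ?_
  have hd : (m : ℝ) ^ 2 < d := by exact_mod_cast hS d hd
  have hm' : (0 : ℝ) < m := by exact_mod_cast hm
  calc log d / d ≤ 2 / √d := log_div_self_le_two_div_sqrt ((pow_pos hm' 2).trans hd)
    _ ≤ 2 / m := by
      gcongr
      exact (sqrt_sq hm'.le).symm.le.trans (sqrt_le_sqrt hd.le)

theorem sum_log_div_self_le (hS : ∀ d ∈ S, 0 < d) :
    ∑ d ∈ S, log d / d ≤ 4 * (log #S + 1) ^ 2 := by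
  obtain rfl | hne := S.eq_empty_or_nonempty
  · simp
  set k := #S
  have hk : 0 < k := hne.card_pos
  have hL : 0 ≤ log k := log_natCast_nonneg k
  have hlog_sq : log (k ^ 2 : ℕ) = 2 * log k := by push_cast; rw [log_pow]; norm_num
  have h_small : ∑ d ∈ S with d ≤ k ^ 2, log d / d ≤ 2 * log k * (1 + 2 * log k) := by
    rw [← hlog_sq]
    exact sum_log_div_self_le_of_forall_le _ _ fun d hd =>
      ⟨hS d (mem_filter.mp hd).1, (mem_filter.mp hd).2⟩
  have h_large : ∑ d ∈ S with ¬d ≤ k ^ 2, log d / d ≤ 2 := calc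
    _ ≤ (#{d ∈ S | ¬d ≤ k ^ 2} : ℝ) * (2 / k) :=
        sum_log_div_self_le_of_forall_sq_lt _ hk fun d hd => not_le.mp (mem_filter.mp hd).2
    _ ≤ (k : ℝ) * (2 / k) := by gcongr; exact card_filter_le _ _
    _ = 2 := mul_div_cancel₀ 2 (Nat.cast_pos.mpr hk).ne'
  rw [← sum_filter_add_sum_filter_not S (· ≤ k ^ 2)]
  nlinarith

end

theorem zaremba_big_O_log_tau_sq :
    ∃ C : ℝ, ∀ n : ℕ, 2 ≤ n →
      ∑ d ∈ n.divisors, Real.log d / d ≤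
        C * (Real.log (n.divisors.card) + 1) ^ 2 :=
  ⟨4, fun _ _ => sum_log_div_self_le _ fun _ => Nat.pos_of_mem_divisors⟩
end

section
/- For every positive integer n, z(n) ≤ (∏_{p|n} p/(p−1)) · (∑_{p|n} (log p)/(p−1)), where the product and sum range over the distinct prime divisors of n. -/
/-!
Write `s(n) = ∑_{d ∣ n} 1/d`. For coprime `a, b` the divisors of `ab` are the products of divisors
of `a` and of `b`, so `s` is multiplicative and `z` obeys the product rule
`z(ab) = z(a) s(b) + s(a) z(b)` (indeed `z = -s'` for `s(σ) = ∑_{d ∣ n} d^{-σ}` at `σ = 1`).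
Hence `s(n) ≤ ∏ p/(p-1)` and `z(n) ≤ s(n) ∑ log p/(p-1)` reduce to prime powers, where
`s(p^k) = ∑_{j ≤ k} p^{-j}` and `z(p^k) = log p ∑_{j ≤ k} j p^{-j}` are (weighted) geometric sums.
-/

open Finset

theorem Nat.Coprime.sum_divisors_mul_eq_sum_sum {M : Type*} [AddCommMonoid M] {a b : ℕ}
    (hab : a.Coprime b) (f : ℕ → M) :
    ∑ d ∈ (a * b).divisors, f d = ∑ x ∈ a.divisors, ∑ y ∈ b.divisors, f (x * y) := by
  rw [Nat.divisors_mul, Finset.mul_def, sum_image hab.mul_injOn_divisors, sum_product]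

lemma mul_sum_range_mul_pow_add {R : Type*} [CommRing R] (x : R) (n : ℕ) :
    (1 - x) * ∑ j ∈ range n, (j : R) * x ^ j + n * x ^ n = x * ∑ j ∈ range n, x ^ j := by
  induction n with
  | zero => simp
  | succ n ih =>
    simp only [sum_range_succ, Nat.cast_add, Nat.cast_one]
    linear_combination ih

lemma mul_sum_range_mul_pow_le {R : Type*} [CommRing R] [PartialOrder R] [IsStrictOrderedRing R]
    {x : R} (hx : 0 ≤ x) (n : ℕ) :
    (1 - x) * ∑ j ∈ range n, (j : R) * x ^ j ≤ x * ∑ j ∈ range n, x ^ j := by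
  rw [← mul_sum_range_mul_pow_add]
  exact le_add_of_nonneg_right (by positivity)

lemma Nat.one_lt_cast_of_mem_primeFactors {n p : ℕ} (hp : p ∈ n.primeFactors) : (1 : ℝ) < p :=
  Nat.one_lt_cast.2 (Nat.prime_of_mem_primeFactors hp).one_lt

noncomputable def invDivisorSum (n : ℕ) : ℝ := ∑ d ∈ n.divisors, (d : ℝ)⁻¹

noncomputable def logDivisorSum (n : ℕ) : ℝ := ∑ d ∈ n.divisors, Real.log d / d

lemma invDivisorSum_nonneg (n : ℕ) : 0 ≤ invDivisorSum n :=
  sum_nonneg fun _ _ => by positivity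

lemma invDivisorSum_mul {a b : ℕ} (hab : a.Coprime b) :
    invDivisorSum (a * b) = invDivisorSum a * invDivisorSum b := by
  simp only [invDivisorSum, hab.sum_divisors_mul_eq_sum_sum, sum_mul_sum, Nat.cast_mul, mul_inv]

lemma logDivisorSum_mul {a b : ℕ} (hab : a.Coprime b) :
    logDivisorSum (a * b) =
      logDivisorSum a * invDivisorSum b + invDivisorSum a * logDivisorSum b := by
  simp only [logDivisorSum, invDivisorSum, hab.sum_divisors_mul_eq_sum_sum, sum_mul_sum,
    ← sum_add_distrib]
  refine sum_congr rfl fun x hx => sum_congr rfl fun y hy => ?_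
  have hx0 : (x : ℝ) ≠ 0 := Nat.cast_ne_zero.2 (Nat.ne_of_gt (Nat.pos_of_mem_divisors hx))
  have hy0 : (y : ℝ) ≠ 0 := Nat.cast_ne_zero.2 (Nat.ne_of_gt (Nat.pos_of_mem_divisors hy))
  rw [Nat.cast_mul, Real.log_mul hx0 hy0]
  field_simp

section PrimePow

variable {p : ℕ}

lemma invDivisorSum_prime_pow (hp : p.Prime) (k : ℕ) :
    invDivisorSum (p ^ k) = ∑ j ∈ range (k + 1), (p : ℝ)⁻¹ ^ j := by
  simp only [invDivisorSum, Nat.sum_divisors_prime_pow hp, Nat.cast_pow, inv_pow]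

lemma logDivisorSum_prime_pow (hp : p.Prime) (k : ℕ) :
    logDivisorSum (p ^ k) = Real.log p * ∑ j ∈ range (k + 1), (j : ℝ) * (p : ℝ)⁻¹ ^ j := by
  simp only [logDivisorSum, Nat.sum_divisors_prime_pow hp, mul_sum, Nat.cast_pow, Real.log_pow,
    inv_pow]
  refine sum_congr rfl fun j _ => ?_
  ring

lemma invDivisorSum_prime_pow_le (hp : p.Prime) (k : ℕ) :
    invDivisorSum (p ^ k) ≤ p / (p - 1) := by
  have hp1 : (1 : ℝ) < p := Nat.one_lt_cast.2 hp.one_lt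
  rw [invDivisorSum_prime_pow hp, ← Nat.Ico_zero_eq_range]
  calc ∑ j ∈ Ico 0 (k + 1), (p : ℝ)⁻¹ ^ j ≤ (p : ℝ)⁻¹ ^ 0 / (1 - (p : ℝ)⁻¹) :=
        geom_sum_Ico_le_of_lt_one (by positivity) (inv_lt_one_of_one_lt₀ hp1)
    _ = p / (p - 1) := by field_simp

lemma logDivisorSum_prime_pow_le (hp : p.Prime) (k : ℕ) :
    logDivisorSum (p ^ k) ≤ invDivisorSum (p ^ k) * (Real.log p / (p - 1)) := by
  have hp1 : (1 : ℝ) < p := Nat.one_lt_cast.2 hp.one_lt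
  rw [logDivisorSum_prime_pow hp, invDivisorSum_prime_pow hp]
  set W := ∑ j ∈ range (k + 1), (j : ℝ) * (p : ℝ)⁻¹ ^ j
  set G := ∑ j ∈ range (k + 1), (p : ℝ)⁻¹ ^ j
  have hW : W ≤ G / (p - 1) := by
    have key := mul_sum_range_mul_pow_le (inv_nonneg.2 (zero_le_one.trans hp1.le)) (k + 1)
    rw [le_div_iff₀ (by linarith)]
    calc W * (p - 1) = p * ((1 - (p : ℝ)⁻¹) * W) := by field_simp
      _ ≤ p * ((p : ℝ)⁻¹ * G) := by gcongr
      _ = G := by field_simp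
  calc Real.log p * W ≤ Real.log p * (G / (p - 1)) := by gcongr
    _ = G * (Real.log p / (p - 1)) := by ring

end PrimePow

lemma invDivisorSum_le_prod (n : ℕ) :
    invDivisorSum n ≤ ∏ p ∈ n.primeFactors, (p : ℝ) / (p - 1) := by
  induction n using Nat.recOnPosPrimePosCoprime with
  | zero => simp [invDivisorSum]
  | one => simp [invDivisorSum]
  | prime_pow p k hp hk =>
    rw [Nat.primeFactors_prime_pow hk.ne' hp, prod_singleton]
    exact invDivisorSum_prime_pow_le hp k
  | coprime a b ha hb hab iha ihb =>
    rw [invDivisorSum_mul hab, Nat.primeFactors_mul (by omega) (by omega),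
      prod_union hab.disjoint_primeFactors]
    have hprod : 0 ≤ ∏ p ∈ a.primeFactors, (p : ℝ) / (p - 1) :=
      prod_nonneg fun p hp => by
        have := Nat.one_lt_cast_of_mem_primeFactors hp
        exact div_nonneg (by linarith) (by linarith)
    exact mul_le_mul iha ihb (invDivisorSum_nonneg b) hprod

lemma logDivisorSum_le (n : ℕ) :
    logDivisorSum n ≤ invDivisorSum n * ∑ p ∈ n.primeFactors, Real.log p / (p - 1) := by
  induction n using Nat.recOnPosPrimePosCoprime with
  | zero => simp [logDivisorSum]
  | one => simp [logDivisorSum]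
  | prime_pow p k hp hk =>
    rw [Nat.primeFactors_prime_pow hk.ne' hp, sum_singleton]
    exact logDivisorSum_prime_pow_le hp k
  | coprime a b ha hb hab iha ihb =>
    rw [logDivisorSum_mul hab, invDivisorSum_mul hab, Nat.primeFactors_mul (by omega) (by omega),
      sum_union hab.disjoint_primeFactors]
    have ha' := mul_le_mul_of_nonneg_right iha (invDivisorSum_nonneg b)
    have hb' := mul_le_mul_of_nonneg_left ihb (invDivisorSum_nonneg a)
    linarith

theorem weber_4_3_general (n : ℕ) :
    ∑ d ∈ n.divisors, Real.log d / d ≤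
      (∏ p ∈ n.primeFactors, (p : ℝ) / (p - 1)) *
        (∑ p ∈ n.primeFactors, Real.log p / (p - 1)) := by
  have hT : 0 ≤ ∑ p ∈ n.primeFactors, Real.log p / (p - 1) :=
    sum_nonneg fun p hp => by
      have := Nat.one_lt_cast_of_mem_primeFactors hp
      exact div_nonneg (Real.log_nonneg this.le) (by linarith)
  calc logDivisorSum n ≤ invDivisorSum n * ∑ p ∈ n.primeFactors, Real.log p / (p - 1) :=
        logDivisorSum_le n
    _ ≤ _ := mul_le_mul_of_nonneg_right (invDivisorSum_le_prod n) hT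

theorem weber_4_3 (n : ℕ) (hn : 0 < n) :
    ∑ d ∈ n.divisors, Real.log d / d ≤
      (∏ p ∈ n.primeFactors, (p : ℝ) / (p - 1)) *
        (∑ p ∈ n.primeFactors, Real.log p / (p - 1)) :=
  weber_4_3_general n
end

section
/- If n ≡ 2 (mod 3) or n ≡ 3 (mod 4), then n is not strongly pseudoperfect. -/
/-!
The set of divisors witnessing strong pseudoperfection of `n` is closed under `d ↦ n / d`.
Modulo 3 the residue 2 is not a square and `a * b = 2` forces `a + b = 0`; modulo 4 the same holds
for the residue 3. So when `n ≡ 2 (mod 3)` or `n ≡ 3 (mod 4)`, complementary divisors cancel and the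
witness sums to `0`, whereas `2 * n` is `1` mod 3, resp. `2` mod 4.
-/

def StronglyPseudoperfect (n : ℕ) : Prop :=
  0 < n ∧ ∃ S₁ : Finset ℕ, S₁ ⊆ n.divisors ∧ ∑ d ∈ S₁, d = 2 * n ∧
    ∀ d ∈ n.divisors, (d ∈ S₁ ↔ n / d ∈ S₁)

theorem sum_natCast_eq_zero_of_map_div_mem {R : Type*} [Semiring R] {n : ℕ} (hn : n ≠ 0)
    {S : Finset ℕ} (hS : S ⊆ n.divisors) (hS_div : ∀ d ∈ S, n / d ∈ S)
    (hfactor : ∀ a b : R, a * b = n → a + b = 0) (hnot_sq : ∀ a : R, a * a ≠ n) :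
    ∑ d ∈ S, (d : R) = 0 := by
  have hdvd : ∀ d ∈ S, d ∣ n := fun d hd => Nat.dvd_of_mem_divisors (hS hd)
  refine Finset.sum_involution (fun d _ => n / d) (fun d hd => ?_) (fun d hd _ hfix => ?_)
    hS_div (fun d hd => Nat.div_div_self (hdvd d hd) hn)
  · refine hfactor _ _ ?_
    rw [← Nat.cast_mul, Nat.mul_div_cancel' (hdvd d hd)]
  · refine hnot_sq d ?_
    conv_rhs => rw [← Nat.mul_div_cancel' (hdvd d hd), hfix]
    rw [Nat.cast_mul]

theorem not_stronglyPseudoperfect_of_natCast_eq {R : Type*} [Semiring R] {n : ℕ} {r : R}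
    (hr : (n : R) = r) (hfactor : ∀ a b : R, a * b = r → a + b = 0)
    (hnot_sq : ∀ a : R, a * a ≠ r) (htwo_mul : 2 * r ≠ 0) :
    ¬ StronglyPseudoperfect n := by
  rintro ⟨hpos, S, hS, hsum, hS_div⟩
  subst hr
  have hsum_zero := sum_natCast_eq_zero_of_map_div_mem hpos.ne' hS
    (fun d hd => (hS_div d (hS hd)).mp hd) hfactor hnot_sq
  rw [← Nat.cast_sum, hsum, Nat.cast_mul, Nat.cast_two] at hsum_zero
  exact htwo_mul hsum_zero

theorem strongly_pseudoperfect_mod (n : ℕ) (h : n % 3 = 2 ∨ n % 4 = 3) :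
    ¬ StronglyPseudoperfect n := by
  rcases h with h | h
  · exact not_stronglyPseudoperfect_of_natCast_eq (R := ZMod 3) (r := 2)
      (by rw [← ZMod.natCast_mod, h, Nat.cast_ofNat]) (by decide) (by decide) (by decide)
  · exact not_stronglyPseudoperfect_of_natCast_eq (R := ZMod 4) (r := 3)
      (by rw [← ZMod.natCast_mod, h, Nat.cast_ofNat]) (by decide) (by decide) (by decide)
end

section
/- For every integer m ≥ 2, the number n = 2^{m−1}(2^m − 1) is strongly pseudoperfect: the set S₁ = {2^i : 0 ≤ i ≤ m−1} ∪ {2^i(2^m −1) : 0 ≤ i ≤ m−1} consists of divisors of n, sums to 2n, and is closed under d ↦ n/d. -/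
/-! For odd `q > 1`, the divisors `2^i` and `2^i q` (`i ≤ k`) of `2^k q` are pairwise distinct, sum
to `(2^(k+1) - 1)(q + 1)`, and `d ↦ 2^k q / d` swaps `2^i` with `2^(k-i) q`. When
`q = 2^(k+1) - 1` the sum is `q · 2^(k+1) = 2 · 2^k q`. -/

open Finset

lemma StronglyPseudoperfect.of_div_mem {n : ℕ} (hn : 0 < n) (S : Finset ℕ)
    (hS : S ⊆ n.divisors) (hsum : ∑ d ∈ S, d = 2 * n) (hdiv : ∀ d ∈ S, n / d ∈ S) :
    StronglyPseudoperfect n := by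
  refine ⟨hn, S, hS, hsum, fun d hd => ⟨hdiv d, fun h => ?_⟩⟩
  simpa [Nat.div_div_self (Nat.dvd_of_mem_divisors hd) hn.ne'] using hdiv _ h

namespace Nat

def twoPowDivisors (k q : ℕ) : Finset ℕ :=
  (range (k + 1)).image (2 ^ ·) ∪ (range (k + 1)).image (2 ^ · * q)

variable {k q d : ℕ}

lemma mem_twoPowDivisors : d ∈ twoPowDivisors k q ↔ ∃ i ≤ k, d = 2 ^ i ∨ d = 2 ^ i * q := by
  simp only [twoPowDivisors, mem_union, mem_image, mem_range, Nat.lt_succ_iff]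
  grind

lemma twoPowDivisors_subset_divisors (hq : q ≠ 0) :
    twoPowDivisors k q ⊆ (2 ^ k * q).divisors := by
  intro d hd
  obtain ⟨i, hi, rfl | rfl⟩ := mem_twoPowDivisors.1 hd
  · exact mem_divisors.2 ⟨dvd_mul_of_dvd_left (pow_dvd_pow 2 hi) q, by positivity⟩
  · exact mem_divisors.2 ⟨mul_dvd_mul_right (pow_dvd_pow 2 hi) q, by positivity⟩

lemma div_mem_twoPowDivisors (hq : q ≠ 0) (hd : d ∈ twoPowDivisors k q) :
    2 ^ k * q / d ∈ twoPowDivisors k q := by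
  obtain ⟨i, hi, rfl | rfl⟩ := mem_twoPowDivisors.1 hd
  all_goals
    have hk : 2 ^ k = 2 ^ i * 2 ^ (k - i) := by rw [← pow_add, Nat.add_sub_cancel' hi]
    refine mem_twoPowDivisors.2 ⟨k - i, k.sub_le i, ?_⟩
  · right
    rw [hk, mul_assoc, Nat.mul_div_cancel_left _ (by positivity)]
  · left
    rw [hk, mul_right_comm, Nat.mul_div_cancel_left _ (by positivity)]

lemma two_pow_ne_two_pow_mul (hq : Odd q) (hq1 : 1 < q) (i j : ℕ) : 2 ^ i ≠ 2 ^ j * q := by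
  intro h
  have hcop : Coprime q (2 ^ i) := (coprime_two_left.2 hq).pow_left i |>.symm
  exact hq1.ne' (hcop.eq_one_of_dvd (h ▸ dvd_mul_left q _))

lemma sum_twoPowDivisors (hq : Odd q) (hq1 : 1 < q) :
    ∑ d ∈ twoPowDivisors k q, d = (2 ^ (k + 1) - 1) * (q + 1) := by
  have hdisj : Disjoint ((range (k + 1)).image (2 ^ ·)) ((range (k + 1)).image (2 ^ · * q)) := by
    simp only [disjoint_left, mem_image]
    rintro _ ⟨i, -, rfl⟩ ⟨j, -, hj⟩
    exact two_pow_ne_two_pow_mul hq hq1 i j hj.symm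
  have hinj : Function.Injective (2 ^ · : ℕ → ℕ) := Nat.pow_right_injective le_rfl
  have hinj' : Function.Injective (2 ^ · * q) :=
    fun i j h => hinj (Nat.eq_of_mul_eq_mul_right (by omega) h)
  have hgeom : ∑ i ∈ range (k + 1), 2 ^ i = 2 ^ (k + 1) - 1 := by
    simpa using geomSum_eq le_rfl (k + 1)
  rw [twoPowDivisors, sum_union hdisj, sum_image hinj.injOn, sum_image hinj'.injOn,
    ← sum_mul, hgeom]
  ring

end Nat

theorem euclid_strongly_pseudoperfect (m : ℕ) (hm : 2 ≤ m) :
    let n := 2 ^ (m - 1) * (2 ^ m - 1)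
    let S₁ := (Finset.range m).image (fun i => 2 ^ i) ∪
      (Finset.range m).image (fun i => 2 ^ i * (2 ^ m - 1))
    S₁ ⊆ n.divisors ∧ ∑ d ∈ S₁, d = 2 * n ∧ (∀ d ∈ S₁, n / d ∈ S₁) ∧
      StronglyPseudoperfect n := by
  obtain ⟨k, rfl⟩ : ∃ k, m = k + 1 := ⟨m - 1, by omega⟩
  intro n S₁
  set q := 2 ^ (k + 1) - 1
  have hS : S₁ = Nat.twoPowDivisors k q := rfl
  have hn : n = 2 ^ k * q := by simp [n, q]
  have h4 : 4 ≤ 2 ^ (k + 1) := by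
    simpa using Nat.pow_le_pow_right two_pos hm
  have hq1 : 1 < q := by omega
  have hq : Odd q := by
    have : 2 ^ (k + 1) = 2 * 2 ^ k := pow_succ' 2 k
    exact Nat.odd_iff.2 (by omega)
  have hsub := Nat.twoPowDivisors_subset_divisors (k := k) (q := q) (by omega)
  have hsum : ∑ d ∈ S₁, d = 2 * n := by
    rw [hS, Nat.sum_twoPowDivisors hq hq1, hn]
    change q * (q + 1) = _
    rw [Nat.sub_add_cancel (by omega), pow_succ]
    ring
  have hdiv : ∀ d ∈ S₁, n / d ∈ S₁ := fun d hd => hn ▸ Nat.div_mem_twoPowDivisors (by omega) hd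
  exact ⟨hn ▸ hsub, hsum, hdiv, .of_div_mem (by rw [hn]; positivity) S₁ (hn ▸ hsub) hsum hdiv⟩
end

section
/- Let n be a positive integer and P a prime with P > σ(n). Then nP is not strongly pseudoperfect. -/
/-!
Write `N = n * P`. Since `P > σ(n) ≥ n`, the prime `P` divides `N` exactly once, so a divisor `d`
of `N` and its complement `N / d` cannot both be multiples of `P`; hence a symmetric nonempty `S₁`
contains a divisor prime to `P`. The members of `S₁` prime to `P` divide `n`, so they sum to a
positive number at most `σ(n) < P`; but that sum is `2N` minus a sum of multiples of `P`, hence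
divisible by `P`.
-/

open Finset

namespace Nat

theorem dvd_sum_filter_not_dvd {S : Finset ℕ} {p : ℕ} (h : p ∣ ∑ d ∈ S, d) :
    p ∣ ∑ d ∈ S with ¬ p ∣ d, d := by
  have hmul : p ∣ ∑ d ∈ S with p ∣ d, d := dvd_sum fun d hd => (mem_filter.mp hd).2
  rw [← sum_filter_add_sum_filter_not S (p ∣ ·)] at h
  exact (Nat.dvd_add_right hmul).mp h

theorem sum_filter_not_dvd_le_sum_divisors {S : Finset ℕ} {n p : ℕ} (hp : p.Prime)
    (hS : S ⊆ (n * p).divisors) :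
    ∑ d ∈ S with ¬ p ∣ d, d ≤ ∑ d ∈ n.divisors, d := by
  refine sum_le_sum_of_subset fun d hd => ?_
  obtain ⟨hdS, hpd⟩ := mem_filter.mp hd
  obtain ⟨hdvd, hnp⟩ := mem_divisors.mp (hS hdS)
  exact mem_divisors.mpr
    ⟨((hp.coprime_iff_not_dvd.mpr hpd).symm).dvd_of_dvd_mul_right hdvd, left_ne_zero_of_mul hnp⟩

theorem exists_mem_not_dvd_of_symm {S : Finset ℕ} {m p : ℕ} (hpm : ¬ p * p ∣ m)
    (hS : S ⊆ m.divisors) (hne : S.Nonempty)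
    (hsymm : ∀ d ∈ m.divisors, d ∈ S ↔ m / d ∈ S) : ∃ d ∈ S, ¬ p ∣ d := by
  obtain ⟨d, hd⟩ := hne
  by_cases hpd : p ∣ d
  · refine ⟨m / d, (hsymm d (hS hd)).mp hd, fun hpd' => hpm ?_⟩
    calc p * p ∣ d * (m / d) := mul_dvd_mul hpd hpd'
      _ = m := Nat.mul_div_cancel' (dvd_of_mem_divisors (hS hd))
  · exact ⟨d, hd, hpd⟩

end Nat

theorem not_strongly_pseudoperfect_of_large_prime_general (n P : ℕ)
    (hP : P.Prime) (hlarge : (∑ d ∈ n.divisors, d) < P) :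
    ¬ StronglyPseudoperfect (n * P) := by
  rintro ⟨hpos, S₁, hS, hsum, hsymm⟩
  have hn : n ≠ 0 := left_ne_zero_of_mul hpos.ne'
  have hPn : ¬ P ∣ n := fun h =>
    (Nat.le_of_dvd (Nat.pos_of_ne_zero hn) h).not_gt <|
      (single_le_sum (fun _ _ => Nat.zero_le _) (Nat.mem_divisors_self n hn)).trans_lt hlarge
  have hne : S₁.Nonempty := nonempty_of_sum_ne_zero (by rw [hsum]; positivity)
  obtain ⟨d, hdS, hPd⟩ := Nat.exists_mem_not_dvd_of_symm
    (by rwa [Nat.mul_dvd_mul_iff_right hP.pos]) hS hne hsymm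
  have hdvd : P ∣ ∑ d ∈ S₁ with ¬ P ∣ d, d :=
    Nat.dvd_sum_filter_not_dvd (hsum ▸ Dvd.intro_left _ (mul_assoc 2 n P))
  have hsum_pos : 0 < ∑ d ∈ S₁ with ¬ P ∣ d, d :=
    (Nat.pos_of_mem_divisors (hS hdS)).trans_le
      (single_le_sum (f := id) (fun _ _ => Nat.zero_le _) (mem_filter.mpr ⟨hdS, hPd⟩))
  exact (Nat.le_of_dvd hsum_pos hdvd).not_gt <|
    (Nat.sum_filter_not_dvd_le_sum_divisors hP hS).trans_lt hlarge

theorem not_strongly_pseudoperfect_of_large_prime (n P : ℕ) (hn : 0 < n)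
    (hP : P.Prime) (hlarge : (∑ d ∈ n.divisors, d) < P) :
    ¬ StronglyPseudoperfect (n * P) :=
  not_strongly_pseudoperfect_of_large_prime_general n P hP hlarge
end

section
/- If n is a primary pseudoperfect number other than 1, 2, or 6 (i.e., 1/n + ∑_{p|n} 1/p = 1 with the sum over prime divisors of n, and n ∉ {1,2,6}), then n is abundant: σ(n) > 2n. -/
/-!
Since `σ(n) / n = ∑_{d ∣ n} 1 / d`, any composite proper divisor `m` of `n` gives
`σ(n) / n ≥ 1 + ∑_{p ∣ n} 1 / p + 1 / m = 2 - 1 / n + 1 / m > 2`. If `n` has at most one prime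
factor, the defining equation forces `1 / n ≥ 1 / 2`, so `n ≤ 2`. Otherwise take `m = p * q` for two
distinct prime factors; this fails only when `n = p * q`, and then the equation reads
`1 + p + q = p * q`, whose only solution is `{p, q} = {2, 3}`.
-/

open Finset

namespace Nat

def IsPrimaryPseudoperfect (n : ℕ) : Prop :=
  (1 : ℚ) / n + ∑ p ∈ n.primeFactors, (1 : ℚ) / p = 1

theorem mul_sum_inv_le_sum_divisors {n : ℕ} {s : Finset ℕ} (hs : s ⊆ n.divisors) :
    (n : ℚ) * ∑ d ∈ s, (1 : ℚ) / d ≤ ∑ d ∈ n.divisors, d := by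
  have hσ : ((∑ d ∈ n.divisors, d : ℕ) : ℚ) = n * ∑ d ∈ n.divisors, (1 : ℚ) / d := by
    push_cast
    rw [← sum_div_divisors n (fun d : ℕ => (d : ℚ)), mul_sum]
    refine sum_congr rfl fun d hd => ?_
    have hd0 : (d : ℚ) ≠ 0 := cast_ne_zero.mpr (pos_of_mem_divisors hd).ne'
    rw [cast_div (dvd_of_mem_divisors hd) hd0, mul_one_div]
  rw [hσ]
  gcongr

namespace IsPrimaryPseudoperfect

variable {n : ℕ}

theorem eq_one_or_eq_two_of_card_primeFactors_le_one (h : IsPrimaryPseudoperfect n)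
    (hc : n.primeFactors.card ≤ 1) : n = 1 ∨ n = 2 := by
  have hsum : ∑ p ∈ n.primeFactors, (1 : ℚ) / p ≤ 1 / 2 := by
    calc ∑ p ∈ n.primeFactors, (1 : ℚ) / p
        ≤ n.primeFactors.card • ((1 : ℚ) / 2) := by
          refine sum_le_card_nsmul _ _ _ fun p hp => ?_
          have : (2 : ℚ) ≤ p := by exact_mod_cast (prime_of_mem_primeFactors hp).two_le
          gcongr
      _ ≤ 1 / 2 := by
          have : (n.primeFactors.card : ℚ) ≤ 1 := by exact_mod_cast hc
          rw [nsmul_eq_mul]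
          linarith
  have hn : (1 : ℚ) / 2 ≤ 1 / n := by
    unfold IsPrimaryPseudoperfect at h
    linarith
  have hn0 : n ≠ 0 := by
    rintro rfl
    norm_num at hn
  have : (n : ℚ) ≤ 2 := le_of_one_div_le_one_div (by norm_num) hn
  have : n ≤ 2 := by exact_mod_cast this
  omega

theorem mul_eq_six {p q : ℕ} (h : IsPrimaryPseudoperfect (p * q)) (hp : p.Prime) (hq : q.Prime)
    (hpq : p ≠ q) : p * q = 6 := by
  have hfac : (p * q).primeFactors = {p, q} := by
    rw [primeFactors_mul hp.ne_zero hq.ne_zero, hp.primeFactors, hq.primeFactors]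
    rfl
  unfold IsPrimaryPseudoperfect at h
  rw [hfac, sum_pair hpq] at h
  have hp0 : (p : ℚ) ≠ 0 := cast_ne_zero.mpr hp.ne_zero
  have hq0 : (q : ℚ) ≠ 0 := cast_ne_zero.mpr hq.ne_zero
  push_cast at h
  field_simp at h
  have heq : 1 + (q + p) = p * q := by exact_mod_cast h
  -- that is, (p - 1) * (q - 1) = 2
  have := hp.two_le
  have := hq.two_le
  have : p ≤ 3 := by nlinarith
  have : q ≤ 3 := by nlinarith
  interval_cases p <;> interval_cases q <;> omega

theorem two_mul_lt_sum_divisors_of_dvd {m : ℕ} (h : IsPrimaryPseudoperfect n) (hm : m ∣ n)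
    (hm1 : 1 < m) (hmn : m < n) (hmp : ¬ m.Prime) : 2 * n < ∑ d ∈ n.divisors, d := by
  have hn0 : n ≠ 0 := by omega
  have h1 : 1 ∉ insert m n.primeFactors := by
    simp only [mem_insert, mem_primeFactors, not_or]
    exact ⟨hm1.ne, fun hp => not_prime_one hp.1⟩
  have hm' : m ∉ n.primeFactors := fun hp => hmp (prime_of_mem_primeFactors hp)
  have hs : insert 1 (insert m n.primeFactors) ⊆ n.divisors := by
    intro d hd
    simp only [mem_insert] at hd
    rcases hd with rfl | rfl | hd
    · exact one_mem_divisors.mpr hn0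
    · exact mem_divisors.mpr ⟨hm, hn0⟩
    · exact mem_divisors.mpr ⟨dvd_of_mem_primeFactors hd, hn0⟩
  have hσ := mul_sum_inv_le_sum_divisors hs
  have hS : ∑ p ∈ n.primeFactors, (1 : ℚ) / p = 1 - 1 / n := by
    unfold IsPrimaryPseudoperfect at h
    linarith
  rw [sum_insert h1, sum_insert hm', hS] at hσ
  have hm0 : (0 : ℚ) < m := by exact_mod_cast (zero_lt_one.trans hm1)
  have hnm : 1 < (n : ℚ) / m := (one_lt_div hm0).mpr (by exact_mod_cast hmn)
  have : (2 * n : ℚ) < ∑ d ∈ n.divisors, d :=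
    calc (2 * n : ℚ) < 2 * n - 1 + n / m := by linarith
      _ = n * (1 / ((1 : ℕ) : ℚ) + (1 / m + (1 - 1 / n))) := by field_simp; ring
      _ ≤ _ := hσ
  exact_mod_cast this

end IsPrimaryPseudoperfect

end Nat

open Nat in
theorem primary_pseudoperfect_abundant_general (n : ℕ)
    (hpp : (1 : ℚ) / n + ∑ p ∈ n.primeFactors, (1 : ℚ) / p = 1)
    (h1 : n ≠ 1) (h2 : n ≠ 2) (h6 : n ≠ 6) :
    2 * n < (∑ d ∈ n.divisors, d) := by
  have h : IsPrimaryPseudoperfect n := hpp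
  have hcard : 1 < n.primeFactors.card := by
    by_contra! hc
    rcases h.eq_one_or_eq_two_of_card_primeFactors_le_one hc with rfl | rfl <;> contradiction
  obtain ⟨p, hpn, q, hqn, hpq⟩ := one_lt_card.mp hcard
  have hp := prime_of_mem_primeFactors hpn
  have hq := prime_of_mem_primeFactors hqn
  have hdvd : p * q ∣ n := ((coprime_primes hp hq).mpr hpq).mul_dvd_of_dvd_of_dvd
    (dvd_of_mem_primeFactors hpn) (dvd_of_mem_primeFactors hqn)
  have hne : p * q ≠ n := by
    rintro rfl
    exact h6 (h.mul_eq_six hp hq hpq)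
  refine h.two_mul_lt_sum_divisors_of_dvd hdvd (one_lt_mul hp.one_le hq.one_lt)
    ((le_of_dvd (pos_of_ne_zero (mem_primeFactors.1 hpn).2.2) hdvd).lt_of_ne hne) ?_
  exact not_prime_mul hp.ne_one hq.ne_one

theorem primary_pseudoperfect_abundant (n : ℕ) (hn : 0 < n)
    (hpp : (1 : ℚ) / n + ∑ p ∈ n.primeFactors, (1 : ℚ) / p = 1)
    (h1 : n ≠ 1) (h2 : n ≠ 2) (h6 : n ≠ 6) :
    2 * n < (∑ d ∈ n.divisors, d) :=
  primary_pseudoperfect_abundant_general n hpp h1 h2 h6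
end
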